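/- Let α₁, α₂, α₃ ∈ ℂ and let x : ℤ → ℂ with x(v) ≠ 0 for all v. Then the following are equivalent: (1) x satisfies equation (E) at every v ∈ ℤ and x(v)²·x(v+3) = x(v−1)·x(v+2)² for every v ∈ ℤ; (2) there exists y : ℤ → ℂ such that for every v ∈ ℤ (writing z_i = x(v+i) and w_i = y(v+i)): 2z₀²·z₃ = −α₃z₁³ − α₂z₀z₁z₂ + w₁; 2z₀³·w₂ = α₃²z₁⁶ + α₂α₃z₀z₁⁴z₂ + 2α₃z₀³z₂³ + w₁² + (−2α₃z₁³ − α₂z₀z₁z₂)·w₁; and w₁² = D(x,v). -/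
import Mathlib


noncomputable section

/-- Equation (E) at `v`. -/
def eqE (α₁ α₂ α₃ : ℂ) (x : ℤ → ℂ) (v : ℤ) : Prop :=
  (x v)^2 * (x (v+3))^2 + α₁ * (x (v+1))^2 * (x (v+2))^2
    + α₂ * x v * x (v+1) * x (v+2) * x (v+3)
    + α₃ * (x v * (x (v+2))^3 + (x (v+1))^3 * x (v+3)) = 0

/-- The discriminant `D` at `v`. -/
def D1 (α₁ α₂ α₃ : ℂ) (x : ℤ → ℂ) (v : ℤ) : ℂ :=
  α₃^2 * (x (v+1))^6 + 2 * α₂ * α₃ * x v * (x (v+1))^4 * x (v+2)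
    + (α₂^2 - 4 * α₁) * (x v)^2 * (x (v+1))^2 * (x (v+2))^2
    - 4 * α₃ * (x v)^3 * (x (v+2))^3

/-- Theorem main_thm_1d_example. -/
theorem statement18 (α₁ α₂ α₃ : ℂ) (x : ℤ → ℂ) (hx : ∀ v, x v ≠ 0) :
    ((∀ v : ℤ, eqE α₁ α₂ α₃ x v) ∧
     (∀ v : ℤ, (x v)^2 * x (v+3) = x (v-1) * (x (v+2))^2)) ↔
    (∃ y : ℤ → ℂ, ∀ v : ℤ,
      (2 * (x v)^2 * x (v+3)
        = -α₃ * (x (v+1))^3 - α₂ * x v * x (v+1) * x (v+2) + y (v+1)) ∧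
      (2 * (x v)^3 * y (v+2)
        = α₃^2 * (x (v+1))^6 + α₂ * α₃ * x v * (x (v+1))^4 * x (v+2)
          + 2 * α₃ * (x v)^3 * (x (v+2))^3 + (y (v+1))^2
          + (-2 * α₃ * (x (v+1))^3 - α₂ * x v * x (v+1) * x (v+2)) * y (v+1)) ∧
      ((y (v+1))^2 = D1 α₁ α₂ α₃ x v)) := by
  constructor
  · rintro ⟨hE, hR⟩
    refine ⟨fun u => 2 * (x (u-1))^2 * x (u+2) + α₃ * (x u)^3
      + α₂ * x (u-1) * x u * x (u+1), fun v => ?_⟩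
    simp only [show v+1-1 = v from by ring, show v+1+2 = v+3 from by ring,
      show v+2-1 = v+1 from by ring, show v+2+2 = v+4 from by ring,
      show v+2+1 = v+3 from by ring, show v+1+1 = v+2 from by ring]
    have hr := hR (v+1)
    simp only [show v+1+3 = v+4 from by ring, show v+1-1 = v from by ring,
      show v+1+2 = v+3 from by ring] at hr
    have he := hE v
    unfold eqE at he
    refine ⟨by ring, by linear_combination (4:ℂ)*(x v)^3 * hr, ?_⟩
    unfold D1
    linear_combination (4:ℂ)*(x v)^2 * he
  · rintro ⟨y, hy⟩
    constructor
    · intro v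
      obtain ⟨h1, _, h3⟩ := hy v
      have hw : y (v+1) = 2 * (x v)^2 * x (v+3) + α₃ * (x (v+1))^3
          + α₂ * x v * x (v+1) * x (v+2) := by linear_combination -h1
      rw [hw] at h3
      unfold D1 at h3
      unfold eqE
      have hne : (4:ℂ)*(x v)^2 ≠ 0 :=
        mul_ne_zero (by norm_num) (pow_ne_zero 2 (hx v))
      refine mul_left_cancel₀ hne ?_
      linear_combination h3
    · intro v
      obtain ⟨h1a, h2, _⟩ := hy (v-1)
      obtain ⟨h1b, _, _⟩ := hy v
      simp only [show v-1+1 = v from by ring, show v-1+2 = v+1 from by ring,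
        show v-1+3 = v+2 from by ring] at h1a h2
      have hwa : y v = 2 * (x (v-1))^2 * x (v+2) + α₃ * (x v)^3
          + α₂ * x (v-1) * x v * x (v+1) := by linear_combination -h1a
      have hwb : y (v+1) = 2 * (x v)^2 * x (v+3) + α₃ * (x (v+1))^3
          + α₂ * x v * x (v+1) * x (v+2) := by linear_combination -h1b
      rw [hwa, hwb] at h2
      have hne : (4:ℂ)*(x (v-1))^3 ≠ 0 :=
        mul_ne_zero (by norm_num) (pow_ne_zero 3 (hx (v-1)))
      refine mul_left_cancel₀ hne ?_
      linear_combination h2
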